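/- arXiv:2305.05826 — 4 statements merged into one kernel-verified Lean document; each statement's English description precedes it below -/
import Mathlib

section
/- There exist absolute constants c, c' > 0 such that the following holds. Let 𝟏 ∈ ℝ^{n×n} be the all-ones matrix, let ε ∈ (0, 1/2) satisfy ε ≥ c/√n, and let S ∈ ℝ^{n×n} satisfy ‖𝟏 − S‖₂ ≤ εn. Then S has at least c'·n/ε² nonzero entries. -/
open Matrix BigOperators

/-- The spectral (operator) norm of a real square matrix. -/
noncomputable def specNorm {m : ℕ} (M : Matrix (Fin m) (Fin m) ℝ) : ℝ :=
  ‖LinearMap.toContinuousLinearMap (Matrix.toEuclideanLin M)‖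

/-- The `n × n` all-ones matrix. -/
def allOnes (m : ℕ) : Matrix (Fin m) (Fin m) ℝ := Matrix.of fun _ _ => 1

/-- Euclidean norm of a vector in `ℝⁿ`. -/
noncomputable def vnorm {m : ℕ} (x : Fin m → ℝ) : ℝ := Real.sqrt (∑ i, (x i) ^ 2)

/-- The (unsorted) singular values of a real square matrix: square roots of the
eigenvalues of `Aᵀ A`. -/
noncomputable def svRaw {m : ℕ} (A : Matrix (Fin m) (Fin m) ℝ) : Fin m → ℝ :=
  fun j => Real.sqrt ((Matrix.isHermitian_conjTranspose_mul_self A).eigenvalues j)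

/-- `sval A i` is the `i`-th largest singular value of `A` (1-based indexing);
it is `0` for `i = 0` and for `i > m`. -/
noncomputable def sval {m : ℕ} (A : Matrix (Fin m) (Fin m) ℝ) (i : ℕ) : ℝ :=
  if h : 1 ≤ i ∧ i ≤ m then (svRaw A ∘ Tuple.sort (svRaw A)) ⟨m - i, by omega⟩ else 0

/-- The nuclear (Schatten-1) norm of a real square matrix: the sum of its singular values. -/
noncomputable def nuclearNorm {m : ℕ} (A : Matrix (Fin m) (Fin m) ℝ) : ℝ :=
  ∑ j, svRaw A j

/-- The smallest eigenvalue of a symmetric real matrix, via the Rayleigh quotient. -/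
noncomputable def lamMin {m : ℕ} (A : Matrix (Fin m) (Fin m) ℝ) : ℝ :=
  sInf {r : ℝ | ∃ x : Fin m → ℝ, vnorm x = 1 ∧ r = x ⬝ᵥ (A *ᵥ x)}

/-!
Write `E = 𝟏 - S`, so that `‖E‖₂ ≤ εn`. Testing `E` against the all-ones vector gives
`∑ E ≤ n‖E‖₂ ≤ εn²`, hence `∑ S ≥ n²/2`; each column of `E` has squared length at most `‖E‖₂²`,
so `‖E‖_F² ≤ ε²n³` and `‖S‖_F² ≤ 2n² + 2ε²n³ ≤ 4ε²n³`, using `ε²n ≥ 1`. Cauchy–Schwarz over the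
support of `S` gives `(∑ S)² ≤ nnz(S) · ‖S‖_F²`, i.e. `nnz(S) ≥ n/(16ε²)`.
-/

open scoped Matrix.Norms.L2Operator

theorem specNorm_eq_l2_opNorm {m : ℕ} (M : Matrix (Fin m) (Fin m) ℝ) : specNorm M = ‖M‖ := rfl

theorem specNorm_nonneg {m : ℕ} (M : Matrix (Fin m) (Fin m) ℝ) : 0 ≤ specNorm M := norm_nonneg _

theorem sum_sq_mulVec_le_specNorm_sq_mul {m : ℕ} (M : Matrix (Fin m) (Fin m) ℝ) (x : Fin m → ℝ) :
    ∑ i, (M *ᵥ x) i ^ 2 ≤ specNorm M ^ 2 * ∑ i, x i ^ 2 := by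
  have h := M.l2_opNorm_mulVec (WithLp.toLp 2 x)
  have h2 := pow_le_pow_left₀ (norm_nonneg _) h 2
  rw [mul_pow, EuclideanSpace.norm_sq_eq, EuclideanSpace.norm_sq_eq] at h2
  simpa [specNorm_eq_l2_opNorm] using h2

theorem sum_sq_col_le_specNorm_sq {m : ℕ} (M : Matrix (Fin m) (Fin m) ℝ) (j : Fin m) :
    ∑ i, M i j ^ 2 ≤ specNorm M ^ 2 := by
  simpa [Matrix.mulVec_single, Pi.single_apply] using
    sum_sq_mulVec_le_specNorm_sq_mul M (Pi.single j 1)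

theorem sum_sum_sq_le_card_mul_specNorm_sq {m : ℕ} (M : Matrix (Fin m) (Fin m) ℝ) :
    ∑ i, ∑ j, M i j ^ 2 ≤ m * specNorm M ^ 2 := by
  rw [Finset.sum_comm]
  simpa using Finset.sum_le_sum fun j (_ : j ∈ Finset.univ) => sum_sq_col_le_specNorm_sq M j

theorem sum_sum_le_card_mul_specNorm {m : ℕ} (M : Matrix (Fin m) (Fin m) ℝ) :
    ∑ i, ∑ j, M i j ≤ m * specNorm M := by
  have hrow : ∀ i, (M *ᵥ fun _ => 1) i = ∑ j, M i j := fun i => by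
    simp [Matrix.mulVec, dotProduct]
  have hsq : (∑ i, ∑ j, M i j) ^ 2 ≤ (m * specNorm M) ^ 2 :=
    calc (∑ i, ∑ j, M i j) ^ 2 ≤ m * ∑ i, (∑ j, M i j) ^ 2 := by
          simpa using sq_sum_le_card_mul_sum_sq (s := Finset.univ) (f := fun i => ∑ j, M i j)
      _ ≤ m * (specNorm M ^ 2 * m) := by
          gcongr
          simpa [hrow] using sum_sq_mulVec_le_specNorm_sq_mul M fun _ => 1
      _ = (m * specNorm M) ^ 2 := by ring
  exact (abs_le_of_sq_le_sq hsq (by have := specNorm_nonneg M; positivity)).trans' (le_abs_self _)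

theorem sq_sum_le_ncard_support_mul_sum_sq {ι R : Type*} [Fintype ι] [Semiring R] [LinearOrder R]
    [IsStrictOrderedRing R] [ExistsAddOfLE R] (f : ι → R) :
    (∑ i, f i) ^ 2 ≤ (Function.support f).ncard * ∑ i, f i ^ 2 := by
  classical
  set s := (Function.support f).toFinset
  have hsum : ∑ i ∈ s, f i = ∑ i, f i :=
    Finset.sum_subset (Finset.subset_univ s) fun i _ hi => by simpa [s] using hi
  have hsq : ∑ i ∈ s, f i ^ 2 ≤ ∑ i, f i ^ 2 :=
    Finset.sum_le_sum_of_subset_of_nonneg (Finset.subset_univ s) fun i _ _ => sq_nonneg (f i)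
  calc (∑ i, f i) ^ 2 = (∑ i ∈ s, f i) ^ 2 := by rw [hsum]
    _ ≤ s.card * ∑ i ∈ s, f i ^ 2 := sq_sum_le_card_mul_sum_sq
    _ ≤ (Function.support f).ncard * ∑ i, f i ^ 2 := by
      rw [Set.ncard_eq_toFinset_card']
      gcongr

theorem sq_sub_mul_specNorm_allOnes_sub_le_sum_sum {m : ℕ} (S : Matrix (Fin m) (Fin m) ℝ) :
    (m : ℝ) ^ 2 - m * specNorm (allOnes m - S) ≤ ∑ i, ∑ j, S i j := by
  have hsum : ∑ i, ∑ j, (allOnes m - S) i j = m ^ 2 - ∑ i, ∑ j, S i j := by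
    simp only [allOnes, Matrix.sub_apply, of_apply, Finset.sum_sub_distrib, Finset.sum_const,
      Finset.card_univ, Fintype.card_fin, nsmul_eq_mul, mul_one]
    ring
  linarith [sum_sum_le_card_mul_specNorm (allOnes m - S)]

theorem sum_sum_sq_le_mul_specNorm_allOnes_sub_sq {m : ℕ} (S : Matrix (Fin m) (Fin m) ℝ) :
    ∑ i, ∑ j, S i j ^ 2 ≤ 2 * m ^ 2 + 2 * m * specNorm (allOnes m - S) ^ 2 := by
  have hentry : ∀ i j, S i j ^ 2 ≤ 2 + 2 * (allOnes m - S) i j ^ 2 := fun i j => by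
    simp only [allOnes, Matrix.sub_apply, of_apply]
    nlinarith [sq_nonneg (2 - S i j)]
  calc ∑ i, ∑ j, S i j ^ 2 ≤ ∑ i, ∑ j, (2 + 2 * (allOnes m - S) i j ^ 2) :=
        Finset.sum_le_sum fun i _ => Finset.sum_le_sum fun j _ => hentry i j
    _ = 2 * m ^ 2 + 2 * ∑ i, ∑ j, (allOnes m - S) i j ^ 2 := by
        simp only [Finset.sum_add_distrib, Finset.sum_const, Finset.card_univ, Fintype.card_fin,
          nsmul_eq_mul, ← Finset.mul_sum]
        ring
    _ ≤ 2 * m ^ 2 + 2 * m * specNorm (allOnes m - S) ^ 2 := by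
        nlinarith [sum_sum_sq_le_card_mul_specNorm_sq (allOnes m - S)]

/-- **Sparsity lower bound for spectral approximation of the all-ones matrix.**
Any `S` with `‖𝟏 − S‖₂ ≤ ε n` (for `ε ∈ (0,1/2)`, `ε ≥ c/√n`) has `Ω(n/ε²)`
nonzero entries. -/
theorem sparsity_lower_bound_psd :
    ∃ c c' : ℝ, 0 < c ∧ 0 < c' ∧ ∀ (n : ℕ) (ε : ℝ),
      ε ∈ Set.Ioo (0 : ℝ) (1 / 2) → c / Real.sqrt n ≤ ε →
      ∀ S : Matrix (Fin n) (Fin n) ℝ, specNorm (allOnes n - S) ≤ ε * n →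
        c' * n / ε ^ 2 ≤ (({p : Fin n × Fin n | S p.1 p.2 ≠ 0} : Set _).ncard : ℝ) := by
  refine ⟨1, 1 / 16, one_pos, by norm_num, ?_⟩
  rintro n ε ⟨hε0, hε2⟩ hc S hS
  rcases n.eq_zero_or_pos with rfl | hn
  · simp
  have hn0 : (0 : ℝ) < n := Nat.cast_pos.mpr hn
  have hεn : 1 ≤ ε ^ 2 * n := by
    have : 1 ≤ ε * √n := by rwa [div_le_iff₀ (by positivity)] at hc
    calc 1 ≤ (ε * √n) ^ 2 := one_le_pow₀ this
      _ = ε ^ 2 * n := by rw [mul_pow, Real.sq_sqrt hn0.le]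
  have hsum : (n : ℝ) ^ 2 / 2 ≤ ∑ i, ∑ j, S i j := by
    nlinarith [sq_sub_mul_specNorm_allOnes_sub_le_sum_sum S]
  have hsq : ∑ i, ∑ j, S i j ^ 2 ≤ 4 * ε ^ 2 * n ^ 3 := by
    nlinarith [sum_sum_sq_le_mul_specNorm_allOnes_sub_sq S,
      pow_le_pow_left₀ (specNorm_nonneg _) hS 2]
  set N := (Function.support fun p : Fin n × Fin n => S p.1 p.2).ncard
  have hcs : (∑ i, ∑ j, S i j) ^ 2 ≤ N * ∑ i, ∑ j, S i j ^ 2 := by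
    rw [← Fintype.sum_prod_type' (f := fun i j => S i j),
      ← Fintype.sum_prod_type' (f := fun i j => S i j ^ 2)]
    exact sq_sum_le_ncard_support_mul_sum_sq fun p : Fin n × Fin n => S p.1 p.2
  show 1 / 16 * n / ε ^ 2 ≤ (N : ℝ)
  rw [div_le_iff₀ (by positivity)]
  refine le_of_mul_le_mul_left ?_ (pow_pos hn0 3)
  nlinarith [N.cast_nonneg (α := ℝ)]
end

section
/- There is an absolute constant c > 0 such that the following holds for every n and every ε with n^{-1/4} < ε < 1/4. Let Q ⊆ [n]×[n] be a set of matrix positions and let f be a function from n×n real matrices to ℝ that depends only on the entries in Q, i.e., f(A) = f(B) whenever A_{ij} = B_{ij} for all (i,j) ∈ Q. If for every matrix A ∈ ℝ^{n×n} with ‖A‖∞ ≤ 1 one has |f(A) − σ₁(A)| ≤ ε·max(n, ‖A‖₁), then |Q| ≥ c·n/ε⁴. (This is the query lower bound for deterministic non-adaptive spectral norm approximation.) -/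
open Matrix BigOperators

/-! Plant an all-ones block `A = 1_S 1ᵀ` on a set `S` of about `7ε²n` rows, each carrying at most
twice the average number of queried entries. Being of rank one, `A` has `σ₁(A) = √(|S| n) ≥ √7 εn`
and `‖A‖₁ ≤ n`. Its queried part `B` agrees with `A` on `Q`, so `f(A) = f(B)`; but `B` has rank at
most `|S|` and squared Frobenius norm at most `2|S||Q|/n`. If `|Q| < n/(1024ε⁴)` this forces
`σ₁(B) ≤ ‖B‖_F < εn/8` and `‖B‖₁ ≤ √|S| ‖B‖_F ≤ 3n/8`, and the two approximation guarantees
`|f(A) - σ₁(A)| ≤ εn`, `|f(B) - σ₁(B)| ≤ ε(n + ‖B‖₁)` contradict each other. -/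

def frobSq {m : ℕ} (A : Matrix (Fin m) (Fin m) ℝ) : ℝ := ∑ i, ∑ j, A i j ^ 2

section SingularValues

variable {m : ℕ} (A : Matrix (Fin m) (Fin m) ℝ)

lemma svRaw_sq (j : Fin m) :
    svRaw A j ^ 2 = (isHermitian_conjTranspose_mul_self A).eigenvalues j :=
  Real.sq_sqrt ((posSemidef_conjTranspose_mul_self A).eigenvalues_nonneg j)

lemma sum_svRaw_sq : ∑ j, svRaw A j ^ 2 = frobSq A := by
  have htrace := (isHermitian_conjTranspose_mul_self A).trace_eq_sum_eigenvalues
  simp only [RCLike.ofReal_real_eq_id, id] at htrace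
  simp only [svRaw_sq, ← htrace, frobSq, trace, diag, mul_apply, conjTranspose_apply,
    star_trivial, ← sq]
  exact Finset.sum_comm

lemma card_svRaw_ne_zero : (Finset.univ.filter fun j => svRaw A j ≠ 0).card = A.rank := by
  rw [← rank_conjTranspose_mul_self, (isHermitian_conjTranspose_mul_self A).rank_eq_card_non_zero_eigs,
    Fintype.card_subtype]
  simp only [svRaw, ne_eq, Real.sqrt_eq_zero ((posSemidef_conjTranspose_mul_self A).eigenvalues_nonneg _)]

lemma svRaw_le_sval_one (j : Fin m) : svRaw A j ≤ sval A 1 := by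
  rw [sval, dif_pos ⟨le_rfl, Nat.one_le_of_lt j.isLt⟩]
  have hj : svRaw A j = (svRaw A ∘ Tuple.sort (svRaw A)) ((Tuple.sort (svRaw A))⁻¹ j) := by simp
  rw [hj]
  exact Tuple.monotone_sort (svRaw A) (Fin.le_def.mpr (by simp; omega))

lemma sval_one_nonneg : 0 ≤ sval A 1 := by
  rw [sval]
  split_ifs
  · exact Real.sqrt_nonneg _
  · exact le_rfl

lemma sval_one_le_sqrt_frobSq : sval A 1 ≤ √(frobSq A) := by
  rcases Nat.eq_zero_or_pos m with rfl | hm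
  · simp [sval]
  rw [sval, dif_pos ⟨le_rfl, hm⟩]
  refine Real.le_sqrt_of_sq_le ?_
  rw [← sum_svRaw_sq]
  exact Finset.single_le_sum (f := fun j => svRaw A j ^ 2) (fun j _ => sq_nonneg _)
    (Finset.mem_univ _)

lemma sum_filter_svRaw_ne_zero_sq :
    ∑ j ∈ Finset.univ.filter (fun j => svRaw A j ≠ 0), svRaw A j ^ 2 = frobSq A := by
  rw [← sum_svRaw_sq, Finset.sum_filter_of_ne]
  intro j _ h
  exact fun h0 => h (by rw [h0]; ring)

lemma frobSq_le_rank_mul_sval_one_sq : frobSq A ≤ A.rank * sval A 1 ^ 2 := by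
  rw [← sum_filter_svRaw_ne_zero_sq, ← card_svRaw_ne_zero, ← nsmul_eq_mul]
  refine Finset.sum_le_card_nsmul _ _ _ fun j _ => ?_
  exact pow_le_pow_left₀ (Real.sqrt_nonneg _) (svRaw_le_sval_one A j) 2

lemma nuclearNorm_le_sqrt_rank_mul_frobSq : nuclearNorm A ≤ √(A.rank * frobSq A) := by
  have hsum : nuclearNorm A = ∑ j ∈ Finset.univ.filter (fun j => svRaw A j ≠ 0), svRaw A j :=
    (Finset.sum_filter_ne_zero _).symm
  refine Real.le_sqrt_of_sq_le ?_
  rw [hsum, ← sum_filter_svRaw_ne_zero_sq, ← card_svRaw_ne_zero]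
  exact sq_sum_le_card_mul_sum_sq

lemma sqrt_frobSq_le_sval_one_of_rank_le_one (h : A.rank ≤ 1) : √(frobSq A) ≤ sval A 1 := by
  refine Real.sqrt_le_iff.mpr ⟨sval_one_nonneg A, ?_⟩
  calc frobSq A ≤ A.rank * sval A 1 ^ 2 := frobSq_le_rank_mul_sval_one_sq A
    _ ≤ 1 * sval A 1 ^ 2 := by gcongr; exact_mod_cast h
    _ = sval A 1 ^ 2 := one_mul _

end SingularValues

lemma rank_le_card_of_eq_zero_of_notMem {ι κ K : Type*} [Fintype ι] [DecidableEq ι] [Fintype κ]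
    [Field K] (B : Matrix ι κ K) (S : Finset ι) (h : ∀ i ∉ S, ∀ j, B i j = 0) :
    B.rank ≤ S.card := by
  classical
  have hB : diagonal (fun i => if i ∈ S then (1 : K) else 0) * B = B := by
    ext i j
    by_cases hi : i ∈ S <;> simp [diagonal_mul, hi, h]
  rw [← hB]
  refine (rank_mul_le_left _ _).trans_eq ?_
  rw [rank_diagonal, Fintype.card_subtype]
  simp

def rowsOnes {m : ℕ} (S : Finset (Fin m)) : Matrix (Fin m) (Fin m) ℝ :=
  vecMulVec (fun i => if i ∈ S then 1 else 0) 1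

def maskEntries {m : ℕ} (Q : Finset (Fin m × Fin m)) (A : Matrix (Fin m) (Fin m) ℝ) :
    Matrix (Fin m) (Fin m) ℝ :=
  of fun i j => if (i, j) ∈ Q then A i j else 0

section Planted

variable {m : ℕ}

lemma rowsOnes_apply (S : Finset (Fin m)) (i j : Fin m) :
    rowsOnes S i j = if i ∈ S then 1 else 0 := by
  simp [rowsOnes, vecMulVec_apply]

lemma abs_rowsOnes_apply_le (S : Finset (Fin m)) (i j : Fin m) : |rowsOnes S i j| ≤ 1 := by
  rw [rowsOnes_apply]; split_ifs <;> norm_num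

lemma rank_rowsOnes_le (S : Finset (Fin m)) : (rowsOnes S).rank ≤ 1 :=
  rank_vecMulVec_le _ _

lemma frobSq_rowsOnes (S : Finset (Fin m)) : frobSq (rowsOnes S) = S.card * m := by
  simp [frobSq, rowsOnes_apply, Finset.sum_ite_mem]

lemma maskEntries_apply_of_mem (Q : Finset (Fin m × Fin m)) (A : Matrix (Fin m) (Fin m) ℝ)
    {p : Fin m × Fin m} (hp : p ∈ Q) : maskEntries Q A p.1 p.2 = A p.1 p.2 := by
  simp [maskEntries, hp]

lemma abs_maskEntries_apply_le (Q : Finset (Fin m × Fin m)) (A : Matrix (Fin m) (Fin m) ℝ)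
    (i j : Fin m) : |maskEntries Q A i j| ≤ |A i j| := by
  simp only [maskEntries, of_apply]; split_ifs <;> simp

lemma frobSq_maskEntries_rowsOnes (Q : Finset (Fin m × Fin m)) (S : Finset (Fin m)) :
    frobSq (maskEntries Q (rowsOnes S)) = (Q.filter fun p => p.1 ∈ S).card := by
  rw [frobSq, ← Fintype.sum_prod_type', ← Finset.sum_boole,
    ← Finset.sum_subset (Finset.subset_univ Q)]
  · refine Finset.sum_congr rfl fun p hp => ?_
    by_cases hS : p.1 ∈ S <;> simp [maskEntries, rowsOnes_apply, hp, hS]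
  · intro p _ hp
    simp [maskEntries, hp]

lemma nuclearNorm_rowsOnes_le (S : Finset (Fin m)) : nuclearNorm (rowsOnes S) ≤ m := by
  have hrank : ((rowsOnes S).rank : ℝ) ≤ 1 := by exact_mod_cast rank_rowsOnes_le S
  have hS : (S.card : ℝ) ≤ m := by exact_mod_cast card_finset_fin_le S
  calc nuclearNorm (rowsOnes S) ≤ √((rowsOnes S).rank * frobSq (rowsOnes S)) :=
        nuclearNorm_le_sqrt_rank_mul_frobSq _
    _ ≤ √(1 * (m * m)) := by
        rw [frobSq_rowsOnes]
        exact Real.sqrt_le_sqrt (mul_le_mul hrank (by gcongr) (by positivity) zero_le_one)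
    _ = m := by rw [one_mul, Real.sqrt_mul_self m.cast_nonneg]

lemma sqrt_card_mul_le_sval_one_rowsOnes (S : Finset (Fin m)) :
    √(S.card * m) ≤ sval (rowsOnes S) 1 :=
  frobSq_rowsOnes S ▸ sqrt_frobSq_le_sval_one_of_rank_le_one _ (rank_rowsOnes_le S)

lemma sval_one_maskEntries_rowsOnes_le (Q : Finset (Fin m × Fin m)) (S : Finset (Fin m)) :
    sval (maskEntries Q (rowsOnes S)) 1 ≤ √(Q.filter fun p => p.1 ∈ S).card :=
  frobSq_maskEntries_rowsOnes Q S ▸ sval_one_le_sqrt_frobSq _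

lemma nuclearNorm_maskEntries_rowsOnes_le (Q : Finset (Fin m × Fin m)) (S : Finset (Fin m)) :
    nuclearNorm (maskEntries Q (rowsOnes S)) ≤ √(S.card * (Q.filter fun p => p.1 ∈ S).card) := by
  have hrank : (maskEntries Q (rowsOnes S)).rank ≤ S.card :=
    rank_le_card_of_eq_zero_of_notMem _ S fun i hi j => by
      simp [maskEntries, rowsOnes_apply, hi]
  refine (nuclearNorm_le_sqrt_rank_mul_frobSq _).trans (Real.sqrt_le_sqrt ?_)
  rw [frobSq_maskEntries_rowsOnes]
  gcongr

lemma two_mul_card_heavy_rows_le (Q : Finset (Fin m × Fin m)) :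
    2 * (Finset.univ.filter fun i => 2 * Q.card < m * (Q.filter fun p => p.1 = i).card).card ≤ m := by
  set H := Finset.univ.filter fun i => 2 * Q.card < m * (Q.filter fun p => p.1 = i).card
  rcases Nat.eq_zero_or_pos Q.card with hQ | hQ
  · have hH : H = ∅ := Finset.filter_false_of_mem fun i _ => by
      simp [Finset.card_eq_zero.mp hQ]
    simp [hH]
  refine Nat.le_of_mul_le_mul_right ?_ hQ
  calc 2 * H.card * Q.card = ∑ i ∈ H, 2 * Q.card := by rw [Finset.sum_const, smul_eq_mul]; ring
    _ ≤ ∑ i ∈ H, m * (Q.filter fun p => p.1 = i).card :=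
        Finset.sum_le_sum fun i hi => (Finset.mem_filter.mp hi).2.le
    _ = m * (Q.filter fun p => p.1 ∈ H).card := by
        rw [← Finset.mul_sum, Finset.sum_card_fiberwise_eq_card_filter]
    _ ≤ m * Q.card := Nat.mul_le_mul_left _ (Finset.card_filter_le _ _)

lemma exists_rows_card_filter_le (Q : Finset (Fin m × Fin m)) {k : ℕ} (hk : 2 * k ≤ m) :
    ∃ S : Finset (Fin m), S.card = k ∧ m * (Q.filter fun p => p.1 ∈ S).card ≤ 2 * k * Q.card := by
  have hL : k ≤ (Finset.univ.filter fun i =>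
      m * (Q.filter fun p => p.1 = i).card ≤ 2 * Q.card).card := by
    have hsplit := Finset.card_filter_add_card_filter_not (s := Finset.univ)
      fun i => m * (Q.filter fun p => p.1 = i).card ≤ 2 * Q.card
    simp only [not_le, Finset.card_univ, Fintype.card_fin] at hsplit
    have := two_mul_card_heavy_rows_le Q
    omega
  obtain ⟨S, hSL, rfl⟩ := Finset.exists_subset_card_eq hL
  refine ⟨S, rfl, ?_⟩
  calc m * (Q.filter fun p => p.1 ∈ S).card = ∑ i ∈ S, m * (Q.filter fun p => p.1 = i).card := by
        rw [← Finset.mul_sum, Finset.sum_card_fiberwise_eq_card_filter]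
    _ ≤ ∑ i ∈ S, 2 * Q.card := Finset.sum_le_sum fun i hi => (Finset.mem_filter.mp (hSL hi)).2
    _ = 2 * S.card * Q.card := by simp [mul_comm, mul_left_comm]

end Planted

lemma pos_and_one_lt_pow_four_mul {N ε : ℝ} (hN : 0 < N) (h : N ^ (-(1 / 4) : ℝ) < ε) :
    0 < ε ∧ 1 < ε ^ 4 * N := by
  have hpos : 0 < N ^ (-(1 / 4) : ℝ) := Real.rpow_pos_of_pos hN _
  have hpow : (N ^ (-(1 / 4) : ℝ)) ^ 4 = N⁻¹ := by
    rw [← Real.rpow_natCast, ← Real.rpow_mul hN.le]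
    norm_num [Real.rpow_neg_one]
  refine ⟨hpos.trans h, ?_⟩
  have h4 : N⁻¹ < ε ^ 4 := hpow ▸ pow_lt_pow_left₀ h hpos.le four_ne_zero
  rw [inv_lt_iff_one_lt_mul₀ hN] at h4
  linarith [mul_comm N (ε ^ 4)]

lemma exists_nat_between_sq_mul {n : ℕ} {ε : ℝ} (hε : 0 < ε) (hε' : ε < 1 / 4)
    (h : 1 < ε ^ 4 * n) : ∃ k : ℕ, 2 * k ≤ n ∧ 7 * ε ^ 2 * n ≤ k ∧ k ≤ 8 * ε ^ 2 * n := by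
  have hε2 : ε ^ 2 < 1 / 16 := by nlinarith
  have hε2n : 16 < ε ^ 2 * n := by nlinarith [sq_nonneg ε, (n.cast_nonneg : (0 : ℝ) ≤ n)]
  have hn : 256 < (n : ℝ) := by nlinarith
  have hceil := Nat.ceil_lt_add_one (by positivity : 0 ≤ 7 * ε ^ 2 * n)
  refine ⟨⌈7 * ε ^ 2 * n⌉₊, ?_, Nat.le_ceil _, by linarith⟩
  have : (2 * ⌈7 * ε ^ 2 * n⌉₊ : ℝ) ≤ n := by nlinarith
  exact_mod_cast this

lemma sqrt_add_lt_sqrt_mul {ε N M q y : ℝ} (hε : 0 < ε) (hεN : 1 < ε ^ 4 * N)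
    (hM : 7 * ε ^ 2 * N ≤ M) (hM' : M ≤ 8 * ε ^ 2 * N) (hq : q < 1 / 1024 * N / ε ^ 4)
    (hy0 : 0 ≤ y) (hy : N * y ≤ 2 * M * q) :
    √y + 2 * ε * N + ε * √(M * y) < √(M * N) := by
  have hN : 0 < N := by nlinarith [pow_pos hε 4]
  have hq' : 1024 * ε ^ 4 * q < N := by
    rw [lt_div_iff₀ (by positivity)] at hq; linarith
  have hM0 : 0 < M := by nlinarith [pow_pos hε 2]
  have hq0 : 0 ≤ q := by nlinarith
  have hy16 : y ≤ 16 * ε ^ 2 * q :=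
    le_of_mul_le_mul_left (by nlinarith [pow_pos hε 2]) hN
  have hy64 : 64 * ε ^ 2 * y < N := by nlinarith [pow_pos hε 2]
  have hsqrt_y : √y < ε * N / 8 := by
    rw [Real.sqrt_lt' (by positivity)]
    nlinarith [pow_pos hε 2]
  have hsqrt_My : √(M * y) ≤ 3 * N / 8 := by
    rw [Real.sqrt_le_left (by positivity)]
    nlinarith [pow_pos hε 2]
  have hsqrt_MN : 5 / 2 * ε * N ≤ √(M * N) := by
    rw [Real.le_sqrt (by positivity) (mul_pos hM0 hN).le]
    nlinarith [pow_pos hε 2]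
  nlinarith

/-- **Non-adaptive query lower bound for deterministic spectral norm approximation.**
Any function of a fixed set `Q` of matrix entries that approximates `σ₁(A)` to error
`ε · max(n, ‖A‖₁)` on all bounded-entry matrices must have `|Q| = Ω(n/ε⁴)`. -/
theorem query_lower_bound_nonadaptive :
    ∃ c : ℝ, 0 < c ∧ ∀ (n : ℕ) (ε : ℝ),
      (n : ℝ) ^ (-(1 / 4) : ℝ) < ε → ε < 1 / 4 →
      ∀ (Q : Finset (Fin n × Fin n)) (f : Matrix (Fin n) (Fin n) ℝ → ℝ),
        (∀ A B : Matrix (Fin n) (Fin n) ℝ, (∀ p ∈ Q, A p.1 p.2 = B p.1 p.2) → f A = f B) →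
        (∀ A : Matrix (Fin n) (Fin n) ℝ, (∀ i j, |A i j| ≤ 1) →
          |f A - sval A 1| ≤ ε * max (n : ℝ) (nuclearNorm A)) →
        c * n / ε ^ 4 ≤ (Q.card : ℝ) := by
  refine ⟨1 / 1024, by norm_num, fun n ε hlow hup Q f hdep happrox => ?_⟩
  rcases Nat.eq_zero_or_pos n with rfl | hn
  · simp
  obtain ⟨hε, hεn⟩ := pos_and_one_lt_pow_four_mul (Nat.cast_pos.mpr hn) hlow
  obtain ⟨k, hkn, hk7, hk8⟩ := exists_nat_between_sq_mul hε hup hεn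
  obtain ⟨S, rfl, hSQ⟩ := exists_rows_card_filter_le Q hkn
  set A := rowsOnes S
  set B := maskEntries Q A
  have hA : ∀ i j, |A i j| ≤ 1 := abs_rowsOnes_apply_le S
  have hfA := abs_le.mp (happrox A hA)
  have hfB := abs_le.mp (happrox B fun i j => (abs_maskEntries_apply_le Q A i j).trans (hA i j))
  rw [hdep A B fun p hp => (maskEntries_apply_of_mem Q A hp).symm,
    max_eq_left (nuclearNorm_rowsOnes_le S)] at hfA
  have hBmax : max (n : ℝ) (nuclearNorm B) ≤ n + √(S.card * (Q.filter fun p => p.1 ∈ S).card) :=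
    (max_le_max le_rfl (nuclearNorm_maskEntries_rowsOnes_le Q S)).trans
      (max_le_add_of_nonneg n.cast_nonneg (Real.sqrt_nonneg _))
  by_contra! hcard
  refine (sqrt_add_lt_sqrt_mul hε hεn hk7 hk8 hcard (Nat.cast_nonneg _)
    (by exact_mod_cast hSQ)).not_ge ?_
  linarith [sqrt_card_mul_le_sval_one_rowsOnes S, sval_one_maskEntries_rowsOnes_le Q S,
    mul_le_mul_of_nonneg_left hBmax hε.le]
end

section
/- Let ε ∈ (0,1). Let A ∈ {−1,0,1}^{n×n} be positive semidefinite, and write A = Σ_{i=1}^p vᵢvᵢᵀ where v₁,…,v_p ∈ {−1,0,1}ⁿ have pairwise disjoint supports; let Sᵢ = supp(vᵢ) and λᵢ = |Sᵢ|. Let G be a simple graph on vertex set [n] such that any two disjoint subsets of vertices, each of size at least (ε/6)n, are joined by at least one edge. Let Ḡ be the simple graph on [n] with an edge {i,j} if and only if {i,j} is an edge of G and |A_{ij}| = 1. For each i, let Cᵢ be the vertex set of a largest connected component of the induced subgraph of Ḡ on Sᵢ. Then λᵢ − (ε/2)n < |Cᵢ| ≤ λᵢ. -/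
open Matrix BigOperators

/-! On the support `S` of `vᵢ` every entry of `A` is `±1`, so `Ḡ` induced on `S` contains `G`
induced on `S` and is, like it, `(ε/6)n`-expanding. In a `δ`-expanding graph no edge leaves a
union of components, so of such a union and its complement one has fewer than `δ` vertices;
hence all components but a largest one cover fewer than `2δ` vertices, and
`2δ = (ε/3)n < (ε/2)n`. -/

theorem Matrix.sum_vecMulVec_self_apply_of_disjoint {R ι m : Type*} [Fintype ι]
    [NonUnitalNonAssocSemiring R] (v : ι → m → R) (i : ι) (s t : m)
    (hs : ∀ j ≠ i, v j s = 0) :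
    (∑ j, vecMulVec (v j) (v j)) s t = v i s * v i t := by
  rw [Matrix.sum_apply, Finset.sum_eq_single i (fun j _ hj => by simp [vecMulVec_apply, hs j hj])
    (fun h => absurd (Finset.mem_univ i) h), vecMulVec_apply]

namespace SimpleGraph

variable {V : Type*} {G H : SimpleGraph V} {δ : ℝ}

def IsExpanding (G : SimpleGraph V) (δ : ℝ) : Prop :=
  ∀ X Y : Set V, Disjoint X Y → δ ≤ X.ncard → δ ≤ Y.ncard → ∃ x ∈ X, ∃ y ∈ Y, G.Adj x y

namespace IsExpanding

theorem pos (hG : G.IsExpanding δ) : 0 < δ := by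
  by_contra! hδ
  obtain ⟨x, hx, -⟩ :=
    hG ∅ ∅ (Set.disjoint_empty _) (by simpa using hδ) (by simpa using hδ)
  exact hx

theorem mono (hGH : G ≤ H) (hG : G.IsExpanding δ) : H.IsExpanding δ := by
  intro X Y hXY hX hY
  obtain ⟨x, hx, y, hy, hxy⟩ := hG X Y hXY hX hY
  exact ⟨x, hx, y, hy, hGH hxy⟩

theorem induce (hG : G.IsExpanding δ) (s : Set V) : (G.induce s).IsExpanding δ := by
  intro X Y hXY hX hY
  rw [← Set.ncard_image_of_injective _ Subtype.val_injective] at hX hY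
  obtain ⟨_, ⟨x, hx, rfl⟩, _, ⟨y, hy, rfl⟩, hxy⟩ :=
    hG _ _ ((Set.disjoint_image_iff Subtype.val_injective).2 hXY) hX hY
  exact ⟨x, hx, y, hy, hxy⟩

theorem ncard_preimage_lt_or (hG : G.IsExpanding δ) (T : Set G.ConnectedComponent) :
    ((G.connectedComponentMk ⁻¹' T).ncard : ℝ) < δ ∨
      ((G.connectedComponentMk ⁻¹' T)ᶜ.ncard : ℝ) < δ := by
  by_contra! h
  obtain ⟨x, hx, y, hy, hxy⟩ := hG _ _ disjoint_compl_right h.1 h.2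
  exact hy (show G.connectedComponentMk y ∈ T from ConnectedComponent.sound hxy.reachable ▸ hx)

/-- Take a union `U` of components that is minimal among those of size at least `δ`. Its
complement has size `< δ`, and removing one component from `U` leaves size `< δ`, so all but
one component of `U` cover fewer than `2δ` vertices. -/
theorem card_lt_two_mul_add_ncard_supp [Finite V] (hG : G.IsExpanding δ)
    (c : G.ConnectedComponent)
    (hc : ∀ c' : G.ConnectedComponent, c'.supp.ncard ≤ c.supp.ncard) :
    (Nat.card V : ℝ) < 2 * δ + c.supp.ncard := by
  have hδ := hG.pos
  set U : Set G.ConnectedComponent → Set V := fun T => G.connectedComponentMk ⁻¹' T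
  by_cases huniv : (Nat.card V : ℝ) < δ
  · linarith [(c.supp.ncard).cast_nonneg (α := ℝ)]
  obtain ⟨T, hTδ, hTmin⟩ :=
    Set.exists_min_image {T | δ ≤ (U T).ncard} (fun T => (U T).ncard) (Set.toFinite _)
      ⟨Set.univ, by simpa [U, Set.ncard_univ] using huniv⟩
  simp only [Set.mem_ofPred_eq] at hTδ hTmin
  obtain ⟨x, hx⟩ : (U T).Nonempty := Set.nonempty_of_ncard_ne_zero (by
    rintro h; rw [h, Nat.cast_zero] at hTδ; linarith)
  set c₀ := G.connectedComponentMk x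
  have hrest : ((U (T \ {c₀})).ncard : ℝ) < δ := by
    by_contra! h
    have hlt : (U (T \ {c₀})).ncard < (U T).ncard :=
      Set.ncard_lt_ncard ⟨Set.preimage_mono Set.sdiff_subset, fun h' => (h' hx).2 rfl⟩
    exact (hTmin _ h).not_gt hlt
  have hsplit : (U T).ncard ≤ (U (T \ {c₀})).ncard + c₀.supp.ncard := by
    refine (Set.ncard_le_ncard fun y hy => ?_).trans (Set.ncard_union_le _ _)
    by_cases hyc : G.connectedComponentMk y = c₀
    · exact Or.inr hyc
    · exact Or.inl ⟨hy, hyc⟩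
  have hcompl := (hG.ncard_preimage_lt_or T).resolve_left hTδ.not_gt
  have htotal := Set.ncard_add_ncard_compl (U T)
  have hc₀ : (c₀.supp.ncard : ℝ) ≤ c.supp.ncard := by exact_mod_cast hc c₀
  have hsplitR : ((U T).ncard : ℝ) ≤ (U (T \ {c₀})).ncard + c₀.supp.ncard := by
    exact_mod_cast hsplit
  rw [← htotal, Nat.cast_add]
  linarith

end IsExpanding

end SimpleGraph

theorem expander_component_recovery_general
    (n : ℕ) (ε : ℝ) (hε : ε ∈ Set.Ioo (0 : ℝ) 1)
    (A : Matrix (Fin n) (Fin n) ℝ)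
    (p : ℕ) (v : Fin p → (Fin n → ℝ))
    (hv : ∀ i t, v i t = -1 ∨ v i t = 0 ∨ v i t = 1)
    (hdisj : ∀ i j, i ≠ j → ∀ t, v i t = 0 ∨ v j t = 0)
    (hAv : A = ∑ i, Matrix.vecMulVec (v i) (v i))
    (G Gbar : SimpleGraph (Fin n))
    (hexp : ∀ X Y : Set (Fin n), Disjoint X Y →
      ε / 6 * n ≤ X.ncard → ε / 6 * n ≤ Y.ncard → ∃ x ∈ X, ∃ y ∈ Y, G.Adj x y)
    (hGbar : ∀ i j, Gbar.Adj i j ↔ G.Adj i j ∧ |A i j| = 1)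
    (i : Fin p) (C : Set (Fin n))
    (hC : ∃ c : (Gbar.induce {t | v i t ≠ 0}).ConnectedComponent,
      C = Subtype.val '' c.supp)
    (hmax : ∀ C' : Set (Fin n),
      (∃ c : (Gbar.induce {t | v i t ≠ 0}).ConnectedComponent,
        C' = Subtype.val '' c.supp) → C'.ncard ≤ C.ncard) :
    (({t | v i t ≠ 0} : Set (Fin n)).ncard : ℝ) - ε / 2 * n < (C.ncard : ℝ) ∧
    C.ncard ≤ ({t | v i t ≠ 0} : Set (Fin n)).ncard := by
  set S : Set (Fin n) := {t | v i t ≠ 0}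
  have habs : ∀ t ∈ S, |v i t| = 1 := fun t ht => by
    rcases hv i t with h | h | h
    · simp [h]
    · exact absurd h ht
    · simp [h]
  have hA : ∀ s ∈ S, ∀ t ∈ S, |A s t| = 1 := fun s hs t ht => by
    rw [hAv, sum_vecMulVec_self_apply_of_disjoint v i s t
      (fun j hj => (hdisj j i hj s).resolve_right hs), abs_mul, habs s hs, habs t ht, one_mul]
  have hGS : (Gbar.induce S).IsExpanding (ε / 6 * n) :=
    (SimpleGraph.IsExpanding.induce hexp S).mono fun s t hst =>
      (hGbar s t).2 ⟨hst, hA s s.2 t t.2⟩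
  obtain ⟨c, rfl⟩ := hC
  have hval : ∀ c' : (Gbar.induce S).ConnectedComponent,
      (Subtype.val '' c'.supp).ncard = c'.supp.ncard :=
    fun _ => Set.ncard_image_of_injective _ Subtype.val_injective
  have hlarge := hGS.card_lt_two_mul_add_ncard_supp c fun c' =>
    hval c' ▸ hval c ▸ hmax _ ⟨c', rfl⟩
  rw [Nat.card_coe_set_eq, ← hval] at hlarge
  refine ⟨by nlinarith [hε.1, (n.cast_nonneg : (0 : ℝ) ≤ n)], Set.ncard_le_ncard ?_⟩
  rintro _ ⟨t, -, rfl⟩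
  exact t.2

/-- **Approximate block recovery via sampled connected components.** Let `A` be PSD with
entries in {−1,0,1}, written as `A = Σ vᵢvᵢᵀ` with sign vectors of pairwise disjoint
supports `Sᵢ` of sizes `λᵢ`. If `G` is `(ε/6)n`-expanding, `Ḡ` keeps the edges of `G`
where `|A_{ij}| = 1`, and `Cᵢ` is a largest connected component of `Ḡ` induced on `Sᵢ`,
then `λᵢ − (ε/2)n < |Cᵢ| ≤ λᵢ`. -/
theorem expander_component_recovery
    (n : ℕ) (ε : ℝ) (hε : ε ∈ Set.Ioo (0 : ℝ) 1)
    (A : Matrix (Fin n) (Fin n) ℝ) (hA : A.PosSemidef)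
    (hent : ∀ i j, A i j = -1 ∨ A i j = 0 ∨ A i j = 1)
    (p : ℕ) (v : Fin p → (Fin n → ℝ))
    (hv : ∀ i t, v i t = -1 ∨ v i t = 0 ∨ v i t = 1)
    (hdisj : ∀ i j, i ≠ j → ∀ t, v i t = 0 ∨ v j t = 0)
    (hAv : A = ∑ i, Matrix.vecMulVec (v i) (v i))
    (G Gbar : SimpleGraph (Fin n))
    (hexp : ∀ X Y : Set (Fin n), Disjoint X Y →
      ε / 6 * n ≤ X.ncard → ε / 6 * n ≤ Y.ncard → ∃ x ∈ X, ∃ y ∈ Y, G.Adj x y)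
    (hGbar : ∀ i j, Gbar.Adj i j ↔ G.Adj i j ∧ |A i j| = 1)
    (i : Fin p) (C : Set (Fin n))
    (hC : ∃ c : (Gbar.induce {t | v i t ≠ 0}).ConnectedComponent,
      C = Subtype.val '' c.supp)
    (hmax : ∀ C' : Set (Fin n),
      (∃ c : (Gbar.induce {t | v i t ≠ 0}).ConnectedComponent,
        C' = Subtype.val '' c.supp) → C'.ncard ≤ C.ncard) :
    (({t | v i t ≠ 0} : Set (Fin n)).ncard : ℝ) - ε / 2 * n < (C.ncard : ℝ) ∧
    C.ncard ≤ ({t | v i t ≠ 0} : Set (Fin n)).ncard :=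
  expander_component_recovery_general n ε hε A p v hv hdisj hAv G Gbar hexp hGbar i C hC hmax
end

section
/- Let A ∈ ℝ^{n×n} be symmetric with ‖A‖∞ ≤ 1, let α ∈ (0,1) with 2/α ≤ n, and suppose σ₁(A) ≥ α·max(n, ‖A‖₁). Then there exists an index p with 1 ≤ p ≤ ⌈2/α⌉ − 1 such that σ_p(A)² − σ_{p+1}(A)² ≥ (3/8)·α³·(max(n, ‖A‖₁))². -/
open Matrix BigOperators

/-!
Let `M = max(n, ‖A‖₁)` and `k = ⌈2/α⌉ − 1`, so that `k ≤ 2/α ≤ k + 1`. Since the singular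
values decrease, `(k+1) σ_{k+1} ≤ ‖A‖₁ ≤ M`, whence `σ_{k+1} ≤ αM/2` while `σ₁ ≥ αM`. So the
`k` consecutive gaps `σ_p² − σ_{p+1}²`, `1 ≤ p ≤ k`, add up to at least `(3/4) α² M²`, and
one of them is at least `(3/4) α² M² / k ≥ (3/8) α³ M²`.
-/

theorem exists_le_sub_succ_of_nsmul_le_sub {G : Type*} [AddCommGroup G] [LinearOrder G]
    [IsOrderedAddMonoid G] (f : ℕ → G) {k : ℕ} (hk : 0 < k) {c : G}
    (h : k • c ≤ f 0 - f k) : ∃ p < k, c ≤ f p - f (p + 1) := by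
  have hsum : ∑ _p ∈ Finset.range k, c ≤ ∑ p ∈ Finset.range k, (f p - f (p + 1)) := by
    rwa [Finset.sum_const, Finset.card_range, Finset.sum_range_sub']
  obtain ⟨p, hp, hc⟩ := Finset.exists_le_of_sum_le (Finset.nonempty_range_iff.mpr hk.ne') hsum
  exact ⟨p, Finset.mem_range.mp hp, hc⟩

theorem one_le_natCeil_sub_one {x : ℝ} (hx : 1 < x) : 1 ≤ ⌈x⌉₊ - 1 := by
  have : 1 < ⌈x⌉₊ := Nat.lt_ceil.mpr (by exact_mod_cast hx)
  omega

theorem natCeil_sub_one_lt {x : ℝ} (hx : 1 < x) : ((⌈x⌉₊ - 1 : ℕ) : ℝ) < x := by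
  have := Nat.ceil_lt_add_one (by linarith : (0 : ℝ) ≤ x)
  rw [Nat.cast_sub (by have := one_le_natCeil_sub_one hx; omega), Nat.cast_one]
  linarith

theorem le_natCeil_sub_one_add_one {x : ℝ} (hx : 1 < x) : x ≤ ((⌈x⌉₊ - 1 : ℕ) : ℝ) + 1 := by
  rw [Nat.cast_sub (by have := one_le_natCeil_sub_one hx; omega), Nat.cast_one, sub_add_cancel]
  exact Nat.le_ceil x

section SingularValues

variable {m : ℕ} (A : Matrix (Fin m) (Fin m) ℝ)

theorem svRaw_nonneg (j : Fin m) : 0 ≤ svRaw A j := Real.sqrt_nonneg _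

theorem sval_nonneg (i : ℕ) : 0 ≤ sval A i := by
  unfold sval
  split
  · exact svRaw_nonneg A _
  · exact le_rfl

theorem nuclearNorm_nonneg : 0 ≤ nuclearNorm A :=
  Finset.sum_nonneg fun j _ => svRaw_nonneg A j

/-- The `r` largest singular values are each at least `σ_r`, and they are part of `‖A‖₁`. -/
theorem natCast_mul_sval_le_nuclearNorm (r : ℕ) : (r : ℝ) * sval A r ≤ nuclearNorm A := by
  by_cases hr : 1 ≤ r ∧ r ≤ m
  swap
  · rw [sval, dif_neg hr, mul_zero]
    exact nuclearNorm_nonneg A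
  set g := svRaw A ∘ Tuple.sort (svRaw A)
  set i : Fin m := ⟨m - r, by omega⟩
  have hnuc : nuclearNorm A = ∑ j, g j :=
    (Equiv.sum_comp (Tuple.sort (svRaw A)) (svRaw A)).symm
  rw [hnuc, show sval A r = g i from dif_pos hr]
  calc (r : ℝ) * g i = ∑ _j ∈ Finset.Ici i, g i := by
        rw [Finset.sum_const, Fin.card_Ici, nsmul_eq_mul]
        congr 2
        simp only [i]
        omega
    _ ≤ ∑ j ∈ Finset.Ici i, g j :=
        Finset.sum_le_sum fun j hj => Tuple.monotone_sort (svRaw A) (Finset.mem_Ici.mp hj)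
    _ ≤ ∑ j, g j :=
        Finset.sum_le_sum_of_subset_of_nonneg (Finset.subset_univ _)
          fun j _ _ => svRaw_nonneg A _

end SingularValues

theorem singular_value_gap_exists_general
    (n : ℕ) (A : Matrix (Fin n) (Fin n) ℝ) (α : ℝ) (hα : α ∈ Set.Ioo (0 : ℝ) 1)
    (hσ : α * max (n : ℝ) (nuclearNorm A) ≤ sval A 1) :
    ∃ p : ℕ, 1 ≤ p ∧ p ≤ ⌈(2 : ℝ) / α⌉₊ - 1 ∧
      (3 / 8) * α ^ 3 * (max (n : ℝ) (nuclearNorm A)) ^ 2 ≤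
        (sval A p) ^ 2 - (sval A (p + 1)) ^ 2 := by
  obtain ⟨hα0, hα1⟩ := hα
  set M := max (n : ℝ) (nuclearNorm A)
  set k := ⌈(2 : ℝ) / α⌉₊ - 1
  have hx : 1 < 2 / α := by rw [lt_div_iff₀ hα0]; linarith
  have hM : 0 ≤ M := le_max_of_le_left (Nat.cast_nonneg n)
  have htail : sval A (k + 1) ≤ α * M / 2 := by
    have hmul : (2 / α) * sval A (k + 1) ≤ M := calc
      (2 / α) * sval A (k + 1) ≤ ((k : ℝ) + 1) * sval A (k + 1) :=
        mul_le_mul_of_nonneg_right (le_natCeil_sub_one_add_one hx) (sval_nonneg A _)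
      _ ≤ M := by
        exact_mod_cast (natCast_mul_sval_le_nuclearNorm A (k + 1)).trans (le_max_right _ _)
    rw [div_mul_eq_mul_div, div_le_iff₀ hα0] at hmul
    linarith
  have hk : (k : ℝ) * α ≤ 2 := by
    have := natCeil_sub_one_lt hx
    rw [lt_div_iff₀ hα0] at this
    linarith
  have hdrop : k • ((3 / 8) * α ^ 3 * M ^ 2) ≤ sval A 1 ^ 2 - sval A (k + 1) ^ 2 := calc
    k • ((3 / 8) * α ^ 3 * M ^ 2) = (k * α) * ((3 / 8) * α ^ 2 * M ^ 2) := by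
      rw [nsmul_eq_mul]; ring
    _ ≤ (α * M) ^ 2 - (α * M / 2) ^ 2 := by nlinarith [sq_nonneg (α * M)]
    _ ≤ sval A 1 ^ 2 - sval A (k + 1) ^ 2 := by
      have hαM : 0 ≤ α * M := mul_nonneg hα0.le hM
      gcongr
      exact sval_nonneg A _
  obtain ⟨p, hpk, hgap⟩ := exists_le_sub_succ_of_nsmul_le_sub (fun p => sval A (p + 1) ^ 2)
    (one_le_natCeil_sub_one hx) hdrop
  exact ⟨p + 1, by omega, by omega, hgap⟩

/-- **Existence of a large singular value gap.** If `A` is symmetric with bounded entries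
and `σ₁(A) ≥ α·max(n,‖A‖₁)`, then there is `p ≤ ⌈2/α⌉ − 1` with
`σ_p(A)² − σ_{p+1}(A)² ≥ (3/8)α³ (max(n,‖A‖₁))²`. -/
theorem singular_value_gap_exists
    (n : ℕ) (A : Matrix (Fin n) (Fin n) ℝ) (hA : A.IsSymm)
    (hbd : ∀ i j, |A i j| ≤ 1) (α : ℝ) (hα : α ∈ Set.Ioo (0 : ℝ) 1)
    (hn : 2 / α ≤ n)
    (hσ : α * max (n : ℝ) (nuclearNorm A) ≤ sval A 1) :
    ∃ p : ℕ, 1 ≤ p ∧ p ≤ ⌈(2 : ℝ) / α⌉₊ - 1 ∧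
      (3 / 8) * α ^ 3 * (max (n : ℝ) (nuclearNorm A)) ^ 2 ≤
        (sval A p) ^ 2 - (sval A (p + 1)) ^ 2 :=
  singular_value_gap_exists_general n A α hα hσ
end
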